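/- arXiv:1805.03336 — 2 statements merged into one kernel-verified Lean document; each statement's English description precedes it below -/
import Mathlib

section
/- Let d ≥ 1 and let μ be a Borel probability measure on ℝ^d with marginal cdfs F_1, …, F_d (where F_i(y) = μ({x ∈ ℝ^d : x_i ≤ y})). Then there exists a Borel probability measure ν on ℝ^d, supported on [0,1]^d, each of whose one-dimensional marginals is the uniform distribution on [0,1], such that for every y = (y_1, …, y_d) ∈ ℝ^d one has μ(∏_{i=1}^d (-∞, y_i]) = ν(∏_{i=1}^d [0, F_i(y_i)]). (Existence part of Sklar's theorem: every multivariate distribution F can be written F(y) = C(F_1(y_1), …, F_d(y_d)) for a copula C.) -/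
/-!
The copula is produced by Rüschendorf's distributional transform
`τ(x, v) = F(x⁻) + v (F(x) - F(x⁻))`, which spreads each atom of a law on `ℝ` uniformly over the
jump of its cdf `F`. If `X ~ ρ` and `V` is uniform on `[0,1]` and independent of `X`, then
`τ(X, V)` is uniform. Applying `τ` to every coordinate of `X ~ μ` with one common `V` gives a random
vector with uniform marginals; its law `ν` is the copula. For each `i`, `{X i ≤ y i}` is contained
in `{τᵢ(X i, V) ≤ Fᵢ(y i)}` and both events have probability `Fᵢ(y i)`, so they agree up to a null
set, which yields `μ (∏ Iic y) = ν (∏ Icc 0 F(y))`.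
-/

open MeasureTheory Set Filter ProbabilityTheory Function
open scoped ENNReal

local notation "𝕌" => (volume.restrict (Icc (0 : ℝ) 1) : Measure ℝ)

instance : IsProbabilityMeasure 𝕌 :=
  ⟨by rw [Measure.restrict_apply_univ, Real.volume_Icc, sub_zero, ENNReal.ofReal_one]⟩

lemma unif01_Iio (u : ℝ) : 𝕌 (Iio u) = ENNReal.ofReal (min u 1) := by
  rw [Measure.restrict_apply measurableSet_Iio]
  refine le_antisymm ?_ ?_
  · calc volume (Iio u ∩ Icc 0 1) ≤ volume (Icc 0 (min u 1)) :=
          measure_mono fun v (hv : v ∈ Iio u ∩ Icc 0 1) => ⟨hv.2.1, le_min hv.1.le hv.2.2⟩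
      _ = _ := by rw [Real.volume_Icc, sub_zero]
  · calc ENNReal.ofReal (min u 1) = volume (Ico 0 (min u 1)) := by rw [Real.volume_Ico, sub_zero]
      _ ≤ volume (Iio u ∩ Icc 0 1) := measure_mono fun v (hv : v ∈ Ico 0 (min u 1)) =>
          ⟨hv.2.trans_le (min_le_left _ _), hv.1, hv.2.le.trans (min_le_right _ _)⟩

lemma unif01_eq_one_of_Icc_subset {A : Set ℝ} (h : Icc 0 1 ⊆ A) : 𝕌 A = 1 := by
  rw [Measure.restrict_apply_superset h, Real.volume_Icc, sub_zero, ENNReal.ofReal_one]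

lemma unif01_eq_zero_of_disjoint {A : Set ℝ} (h : Disjoint A (Icc 0 1)) : 𝕌 A = 0 := by
  rw [Measure.restrict_apply' measurableSet_Icc, h.inter_eq, measure_empty]

lemma ae_snd_mem_Icc_prod_unif01 {α : Type*} [MeasurableSpace α] (μ : Measure α) :
    ∀ᵐ p ∂μ.prod 𝕌, p.2 ∈ Icc 0 1 :=
  Measure.quasiMeasurePreserving_snd.ae (ae_restrict_mem measurableSet_Icc)

namespace ProbabilityTheory

variable (ρ : Measure ℝ)

noncomputable def distribTransform (p : ℝ × ℝ) : ℝ :=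
  leftLim (cdf ρ) p.1 + p.2 * (cdf ρ p.1 - leftLim (cdf ρ) p.1)

lemma leftLim_cdf_le (x : ℝ) : leftLim (cdf ρ) x ≤ cdf ρ x := (monotone_cdf ρ).leftLim_le le_rfl

lemma measurable_distribTransform : Measurable (distribTransform ρ) := by
  have hl : Measurable (leftLim (cdf ρ)) := (monotone_cdf ρ).leftLim.measurable
  have hF : Measurable (cdf ρ) := (monotone_cdf ρ).measurable
  unfold distribTransform
  fun_prop

lemma distribTransform_mem_Icc {x v : ℝ} (hv : v ∈ Icc 0 1) :
    distribTransform ρ (x, v) ∈ Icc (leftLim (cdf ρ) x) (cdf ρ x) := by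
  have := leftLim_cdf_le ρ x
  constructor <;> unfold distribTransform <;> nlinarith [hv.1, hv.2]

lemma leftLim_cdf_nonneg (x : ℝ) : 0 ≤ leftLim (cdf ρ) x :=
  (cdf_nonneg ρ (x - 1)).trans ((monotone_cdf ρ).le_leftLim (sub_one_lt x))

lemma distribTransform_mem_Icc_zero_cdf {x v : ℝ} (hv : v ∈ Icc 0 1) :
    distribTransform ρ (x, v) ∈ Icc 0 (cdf ρ x) :=
  Icc_subset_Icc_left (leftLim_cdf_nonneg ρ x) (distribTransform_mem_Icc ρ hv)

lemma measure_Iio_eq_ofReal_leftLim_cdf [IsProbabilityMeasure ρ] (x : ℝ) :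
    ρ (Iio x) = ENNReal.ofReal (leftLim (cdf ρ) x) := by
  simpa [measure_cdf] using (cdf ρ).measure_Iio (tendsto_cdf_atBot ρ) x

lemma measure_singleton_eq_ofReal_cdf_sub [IsProbabilityMeasure ρ] (x : ℝ) :
    ρ {x} = ENNReal.ofReal (cdf ρ x - leftLim (cdf ρ) x) := by
  simpa [measure_cdf] using (cdf ρ).measure_singleton x

variable {ρ} in
lemma exists_quantile {u : ℝ} (hu : 0 < u) (hS : ∃ x, u ≤ cdf ρ x) :
    ∃ q, (∀ x < q, cdf ρ x < u) ∧ u ≤ cdf ρ q := by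
  set S := {x | u ≤ cdf ρ x}
  have hbdd : BddBelow S := by
    obtain ⟨M, hM⟩ := eventually_atBot.mp ((tendsto_cdf_atBot ρ).eventually (gt_mem_nhds hu))
    exact ⟨M, fun x hx => not_lt.mp fun hxM => (hM x hxM.le).not_ge hx⟩
  refine ⟨sInf S, fun x hx => not_le.mp fun hux => (csInf_le hbdd hux).not_gt hx, ?_⟩
  rw [← (cdf ρ).iInf_Ioi_eq]
  refine le_ciInf fun r => ?_
  obtain ⟨x, hxS, hxr⟩ := (csInf_lt_iff hbdd hS).mp r.2
  exact hxS.trans ((monotone_cdf ρ) hxr.le)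

lemma prod_unif01_distribTransform_preimage_Iio [IsProbabilityMeasure ρ] {u : ℝ} (hu : 0 < u)
    (hS : ∃ x, u ≤ cdf ρ x) :
    ρ.prod 𝕌 (distribTransform ρ ⁻¹' Iio u) = ENNReal.ofReal u := by
  obtain ⟨q, hlt, hqu⟩ := exists_quantile hu hS
  set g : ℝ → ℝ≥0∞ := fun x => 𝕌 (Prod.mk x ⁻¹' (distribTransform ρ ⁻¹' Iio u))
  have hleft : leftLim (cdf ρ) q ≤ u :=
    le_of_tendsto ((monotone_cdf ρ).tendsto_leftLim q)
      (eventually_nhdsWithin_of_forall fun x hx => (hlt x hx).le)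
  -- the fibre over `x` is all of `[0,1]` left of the quantile `q` and misses `[0,1]` right of it
  have hg : ∀ x, g x = (Iio q).indicator 1 x + ({q} : Set ℝ).indicator g x := by
    intro x
    rcases lt_trichotomy x q with hxq | rfl | hxq
    · simp only [indicator_of_mem (show x ∈ Iio q from hxq), Pi.one_apply,
        indicator_of_notMem (show x ∉ ({q} : Set ℝ) from hxq.ne), add_zero, g]
      exact unif01_eq_one_of_Icc_subset fun v hv =>
        (distribTransform_mem_Icc ρ hv).2.trans_lt (hlt x hxq)
    · simp [g]
    · have hux : u ≤ leftLim (cdf ρ) x := hqu.trans ((monotone_cdf ρ).le_leftLim hxq)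
      simp only [indicator_of_notMem (show x ∉ Iio q from hxq.not_gt),
        indicator_of_notMem (show x ∉ ({q} : Set ℝ) from hxq.ne'), add_zero, g]
      exact unif01_eq_zero_of_disjoint <| disjoint_left.mpr fun v hv hv01 =>
        (hux.trans (distribTransform_mem_Icc ρ hv01).1).not_gt hv
  have hq : g q * ρ {q} = ENNReal.ofReal (u - leftLim (cdf ρ) q) := by
    rw [measure_singleton_eq_ofReal_cdf_sub]
    rcases (sub_nonneg.mpr (leftLim_cdf_le ρ q)).eq_or_lt with hjump | hjump
    · have : u = leftLim (cdf ρ) q := le_antisymm (by linarith) hleft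
      rw [← hjump, this, sub_self, ENNReal.ofReal_zero, mul_zero]
    · have hfiber : Prod.mk q ⁻¹' (distribTransform ρ ⁻¹' Iio u) =
          Iio ((u - leftLim (cdf ρ) q) / (cdf ρ q - leftLim (cdf ρ) q)) := by
        ext v
        simp only [mem_preimage, mem_Iio, distribTransform, lt_div_iff₀ hjump]
        constructor <;> intro h <;> linarith
      have hc : (u - leftLim (cdf ρ) q) / (cdf ρ q - leftLim (cdf ρ) q) ≤ 1 :=
        (div_le_one hjump).mpr (by linarith)
      simp only [g, hfiber, unif01_Iio, min_eq_left hc]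
      rw [← ENNReal.ofReal_mul (div_nonneg (sub_nonneg.mpr hleft) hjump.le),
        div_mul_cancel₀ _ hjump.ne']
  rw [Measure.prod_apply ((measurable_distribTransform ρ) measurableSet_Iio)]
  change ∫⁻ x, g x ∂ρ = _
  rw [lintegral_congr hg, lintegral_add_left (measurable_one.indicator measurableSet_Iio),
    lintegral_indicator_one measurableSet_Iio, lintegral_indicator (measurableSet_singleton q),
    lintegral_singleton, hq, measure_Iio_eq_ofReal_leftLim_cdf,
    ← ENNReal.ofReal_add (leftLim_cdf_nonneg ρ q) (sub_nonneg.mpr hleft), add_sub_cancel]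

theorem map_distribTransform_prod_unif01 [IsProbabilityMeasure ρ] :
    (ρ.prod 𝕌).map (distribTransform ρ) = 𝕌 := by
  have hτ := measurable_distribTransform ρ
  have hIio : ∀ u, (ρ.prod 𝕌).map (distribTransform ρ) (Iio u) = 𝕌 (Iio u) := by
    intro u
    rw [Measure.map_apply hτ measurableSet_Iio, unif01_Iio]
    rcases le_or_gt u 0 with hu | hu
    · rw [ENNReal.ofReal_of_nonpos (min_le_of_left_le hu)]
      refine measure_eq_zero_iff_ae_notMem.mpr <|
        (ae_snd_mem_Icc_prod_unif01 ρ).mono fun p hp01 hp => ?_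
      exact (hp.trans_le hu).not_ge (distribTransform_mem_Icc_zero_cdf ρ hp01).1
    by_cases hS : ∃ x, u ≤ cdf ρ x
    · obtain ⟨x, hx⟩ := hS
      rw [prod_unif01_distribTransform_preimage_Iio ρ hu ⟨x, hx⟩,
        min_eq_left (hx.trans (cdf_le_one ρ x))]
    · push Not at hS
      have h1u : 1 ≤ u := le_of_tendsto' (tendsto_cdf_atTop ρ) fun x => (hS x).le
      rw [min_eq_right h1u, ENNReal.ofReal_one, ← prob_compl_eq_zero_iff (hτ measurableSet_Iio)]
      refine measure_eq_zero_iff_ae_notMem.mpr <|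
        (ae_snd_mem_Icc_prod_unif01 ρ).mono fun p hp01 hp => hp ?_
      exact (distribTransform_mem_Icc_zero_cdf ρ hp01).2.trans_lt (hS p.1)
  have := Measure.isProbabilityMeasure_map (μ := ρ.prod 𝕌) hτ.aemeasurable
  refine Measure.ext_of_Ici _ _ fun u => ?_
  rw [← compl_Iio, prob_compl_eq_one_sub measurableSet_Iio, prob_compl_eq_one_sub measurableSet_Iio,
    hIio]

section Copula

variable {ι : Type*} (μ : Measure (ι → ℝ))

noncomputable def distribTransformPi (p : (ι → ℝ) × ℝ) : ι → ℝ :=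
  fun i => distribTransform (μ.map fun x => x i) (p.1 i, p.2)

noncomputable def distribTransformCopula : Measure (ι → ℝ) :=
  (μ.prod 𝕌).map (distribTransformPi μ)

instance [IsProbabilityMeasure μ] (i : ι) : IsProbabilityMeasure (μ.map fun x => x i) :=
  Measure.isProbabilityMeasure_map (measurable_pi_apply i).aemeasurable

lemma measurable_distribTransformPi : Measurable (distribTransformPi μ) :=
  measurable_pi_lambda _ fun i => (measurable_distribTransform _).comp
    (((measurable_pi_apply i).comp measurable_fst).prodMk measurable_snd)

instance [IsProbabilityMeasure μ] : IsProbabilityMeasure (distribTransformCopula μ) :=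
  Measure.isProbabilityMeasure_map (measurable_distribTransformPi μ).aemeasurable

theorem map_eval_distribTransformCopula [IsProbabilityMeasure μ] (i : ι) :
    (distribTransformCopula μ).map (fun x => x i) = 𝕌 := by
  have hcomp : (fun x : ι → ℝ => x i) ∘ distribTransformPi μ =
      distribTransform (μ.map fun x => x i) ∘ Prod.map (fun x : ι → ℝ => x i) id := rfl
  rw [distribTransformCopula, Measure.map_map (measurable_pi_apply i)
    (measurable_distribTransformPi μ), hcomp, ← Measure.map_map (measurable_distribTransform _)
    ((measurable_pi_apply i).prodMap measurable_id), ← Measure.map_prod_map _ _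
    (measurable_pi_apply i) measurable_id, Measure.map_id, map_distribTransform_prod_unif01]

theorem distribTransformCopula_pi_Icc [Countable ι] [IsProbabilityMeasure μ] :
    distribTransformCopula μ (univ.pi fun _ => Icc 0 1) = 1 := by
  have hS : MeasurableSet (univ.pi fun _ : ι => Icc (0 : ℝ) 1) :=
    MeasurableSet.univ_pi fun _ => measurableSet_Icc
  rw [← prob_compl_eq_zero_iff hS, distribTransformCopula,
    Measure.map_apply (measurable_distribTransformPi μ) hS.compl]
  refine measure_eq_zero_iff_ae_notMem.mpr <|
    (ae_snd_mem_Icc_prod_unif01 μ).mono fun p hp01 hp => hp ?_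
  exact fun i _ => Icc_subset_Icc_right (cdf_le_one _ _) (distribTransform_mem_Icc_zero_cdf _ hp01)

theorem measure_pi_Iic_eq_distribTransformCopula [Countable ι] [IsProbabilityMeasure μ]
    (y : ι → ℝ) :
    μ (univ.pi fun i => Iic (y i)) =
      distribTransformCopula μ (univ.pi fun i => Icc 0 (cdf (μ.map fun x => x i) (y i))) := by
  set P := μ.prod 𝕌
  have hT := measurable_distribTransformPi μ
  have hD : ∀ i, MeasurableSet {p : (ι → ℝ) × ℝ | p.1 i ≤ y i} := fun i =>
    measurableSet_le ((measurable_pi_apply i).comp measurable_fst) measurable_const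
  have hDE : ∀ i, {p : (ι → ℝ) × ℝ | p.1 i ≤ y i} =ᵐ[P]
      {p | distribTransformPi μ p i ∈ Icc 0 (cdf (μ.map fun x => x i) (y i))} := by
    intro i
    refine ae_eq_of_ae_subset_of_measure_ge ?_ ?_ (hD i).nullMeasurableSet (measure_ne_top _ _)
    · filter_upwards [ae_snd_mem_Icc_prod_unif01 μ] with p hp01 hp
      exact Icc_subset_Icc_right (monotone_cdf _ hp) (distribTransform_mem_Icc_zero_cdf _ hp01)
    · calc P {p | distribTransformPi μ p i ∈ Icc 0 (cdf (μ.map fun x => x i) (y i))}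
          = 𝕌 (Icc 0 (cdf (μ.map fun x => x i) (y i))) := by
            rw [← map_eval_distribTransformCopula μ i,
              Measure.map_apply (measurable_pi_apply i) measurableSet_Icc, distribTransformCopula,
              Measure.map_apply hT (measurable_pi_apply i measurableSet_Icc)]
            rfl
        _ ≤ volume (Icc 0 (cdf (μ.map fun x => x i) (y i))) := Measure.restrict_apply_le _ _
        _ = P {p | p.1 i ≤ y i} := by
            rw [Real.volume_Icc, sub_zero, ofReal_cdf,
              Measure.map_apply (measurable_pi_apply i) measurableSet_Iic,
              ← mul_one (μ _), ← measure_univ (μ := 𝕌), ← Measure.prod_prod, prod_univ]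
            rfl
  calc μ (univ.pi fun i => Iic (y i))
      = P ((univ.pi fun i => Iic (y i)) ×ˢ univ) := by
        rw [Measure.prod_prod, measure_univ, mul_one]
    _ = P (⋂ i, {p | p.1 i ≤ y i}) := by
        congr 1; ext; simp only [mem_prod, Set.mem_pi, mem_univ, true_implies, mem_Iic, and_true,
          mem_iInter, mem_ofPred_eq]
    _ = P (⋂ i, {p | distribTransformPi μ p i ∈ Icc 0 (cdf (μ.map fun x => x i) (y i))}) :=
        measure_congr (Filter.EventuallyEq.countable_iInter hDE)
    _ = _ := by
        rw [distribTransformCopula, Measure.map_apply hT (MeasurableSet.univ_pi fun _ =>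
          measurableSet_Icc)]
        congr 1; ext; simp only [mem_iInter, mem_ofPred_eq, mem_preimage, Set.mem_pi, mem_univ,
          true_implies]

end Copula

end ProbabilityTheory

theorem sklar_existence_general (d : ℕ)
    (μ : Measure (Fin d → ℝ)) [IsProbabilityMeasure μ]
    (F : Fin d → ℝ → ℝ)
    (hF : ∀ i y, F i y = (μ {x | x i ≤ y}).toReal) :
    ∃ ν : Measure (Fin d → ℝ),
      IsProbabilityMeasure ν ∧
      ν (Set.univ.pi fun _ => Set.Icc (0:ℝ) 1) = 1 ∧
      (∀ i, ν.map (fun x => x i) = volume.restrict (Set.Icc (0:ℝ) 1)) ∧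
      (∀ y : Fin d → ℝ,
        μ (Set.univ.pi fun i => Set.Iic (y i)) =
          ν (Set.univ.pi fun i => Set.Icc 0 (F i (y i)))) := by
  have hF_cdf : F = fun i y => cdf (μ.map fun x => x i) y := by
    ext i y
    rw [hF, cdf_eq_real, measureReal_def,
      Measure.map_apply (measurable_pi_apply i) measurableSet_Iic]
    rfl
  subst hF_cdf
  exact ⟨distribTransformCopula μ, inferInstance, distribTransformCopula_pi_Icc μ,
    map_eval_distribTransformCopula μ, measure_pi_Iic_eq_distribTransformCopula μ⟩

/-- Existence part of Sklar's theorem: for every Borel probability measure `μ` on `ℝ^d`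
with marginal cdfs `F i`, there is a copula `ν` (a probability measure supported on
`[0,1]^d` with uniform marginals) such that
`μ (∏ i, (-∞, y i]) = ν (∏ i, [0, F i (y i)])` for all `y`. -/
theorem sklar_existence (d : ℕ) (hd : 1 ≤ d)
    (μ : Measure (Fin d → ℝ)) [IsProbabilityMeasure μ]
    (F : Fin d → ℝ → ℝ)
    (hF : ∀ i y, F i y = (μ {x | x i ≤ y}).toReal) :
    ∃ ν : Measure (Fin d → ℝ),
      IsProbabilityMeasure ν ∧
      ν (Set.univ.pi fun _ => Set.Icc (0:ℝ) 1) = 1 ∧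
      (∀ i, ν.map (fun x => x i) = volume.restrict (Set.Icc (0:ℝ) 1)) ∧
      (∀ y : Fin d → ℝ,
        μ (Set.univ.pi fun i => Set.Iic (y i)) =
          ν (Set.univ.pi fun i => Set.Icc 0 (F i (y i)))) :=
  sklar_existence_general d μ F hF
end

section
/- Let d ≥ 1 and let μ be a Borel probability measure on ℝ^d whose marginal cdfs F_1, …, F_d are all continuous functions on ℝ. If ν and ν′ are two Borel probability measures on ℝ^d, each supported on [0,1]^d with all one-dimensional marginals uniform on [0,1], and both satisfy μ(∏_{i=1}^d (-∞, y_i]) = ν(∏_{i=1}^d [0, F_i(y_i)]) and μ(∏_{i=1}^d (-∞, y_i]) = ν′(∏_{i=1}^d [0, F_i(y_i)]) for every y ∈ ℝ^d, then ν = ν′. (Uniqueness part of Sklar's theorem: if all the marginals of F are absolutely continuous—in particular continuous—the copula C is unique.) -/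
/-!
Each marginal cdf `F i` is continuous with limits `0` and `1`, so it takes every value in
`(0, 1)`; the representation therefore forces `ν` and `ν'` to agree on the boxes `∏ [0, u i]`
with `u ∈ (0, 1)^d`. Uniform marginals make every hyperplane `{x | x i = a}` and the complement
of the open cube null, so the mass of a lower orthant `∏ (-∞, u i]` is either `0` or the limit
of the masses of an increasing sequence of such boxes. Lower orthants form a π-system generating
the Borel σ-algebra, and two probability measures agreeing on it are equal.
-/

open MeasureTheory Set Filter ProbabilityTheory

theorem MeasureTheory.Measure.ext_of_pi_Iic {ι : Type*} [Finite ι] {μ ν : Measure (ι → ℝ)}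
    [IsFiniteMeasure μ] (huniv : μ univ = ν univ)
    (h : ∀ u : ι → ℝ, μ (pi univ fun i => Iic (u i)) = ν (pi univ fun i => Iic (u i))) :
    μ = ν := by
  have hgen : (inferInstance : MeasurableSpace (ι → ℝ)) =
      MeasurableSpace.generateFrom (pi univ '' pi univ fun _ => range Iic) := by
    refine (generateFrom_eq_pi (fun _ => ?_) fun _ => ?_).symm
    · exact (borel_eq_generateFrom_Iic ℝ).symm.trans BorelSpace.measurable_eq.symm
    · exact ⟨fun n : ℕ => Iic (n : ℝ), fun n => mem_range_self _,
        iUnion_eq_univ_iff.2 fun x => exists_nat_ge x⟩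
  refine ext_of_generate_finite _ hgen (IsPiSystem.pi fun _ => isPiSystem_Iic) ?_ huniv
  rintro _ ⟨s, hs, rfl⟩
  choose u hu using fun i => hs i (mem_univ i)
  obtain rfl : s = fun i => Iic (u i) := funext fun i => (hu i).symm
  exact h u

theorem exists_monotone_iUnion_pi_Iic_eq_pi_Iio {ι α : Type*} [Finite ι]
    [ConditionallyCompleteLinearOrder α] [TopologicalSpace α] [OrderTopology α]
    [DenselyOrdered α] [FirstCountableTopology α] {a b : ι → α} (hab : ∀ i, a i < b i) :
    ∃ s : ℕ → ι → α, Monotone s ∧ (∀ n i, s n i ∈ Ioo (a i) (b i)) ∧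
      ⋃ n, pi univ (fun i => Iic (s n i)) = pi univ fun i => Iio (b i) := by
  choose s hs_mono hs_mem hs_lim using fun i => exists_seq_strictMono_tendsto' (hab i)
  refine ⟨fun n i => s i n, fun m n hmn i => (hs_mono i).monotone hmn, fun n i => hs_mem i n, ?_⟩
  rw [iUnion_univ_pi_of_monotone fun i m n hmn => Iic_subset_Iic.2 ((hs_mono i).monotone hmn)]
  exact pi_congr rfl fun i _ =>
    iUnion_Iic_eq_Iio_of_lt_of_tendsto (fun n => (hs_mem i n).2) (hs_lim i)

theorem ProbabilityTheory.Ioo_subset_range_cdf (μ : Measure ℝ) [IsProbabilityMeasure μ]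
    (hc : Continuous (cdf μ)) : Ioo 0 1 ⊆ range (cdf μ) := fun _ ht =>
  mem_range_of_exists_le_of_exists_ge hc
    ((tendsto_cdf_atBot μ).eventually (eventually_le_nhds ht.1)).exists
    ((tendsto_cdf_atTop μ).eventually (eventually_ge_nhds ht.2)).exists

theorem ProbabilityTheory.cdf_map_eval {ι : Type*} (μ : Measure (ι → ℝ)) [IsProbabilityMeasure μ]
    (i : ι) (y : ℝ) : cdf (μ.map fun x => x i) y = (μ {x | x i ≤ y}).toReal := by
  have := Measure.isProbabilityMeasure_map (μ := μ) (measurable_pi_apply i).aemeasurable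
  rw [cdf_eq_real, measureReal_def, Measure.map_apply (measurable_pi_apply i) measurableSet_Iic]
  rfl

def HasUniformMarginals {ι : Type*} (ν : Measure (ι → ℝ)) : Prop :=
  ∀ i, ν.map (fun x => x i) = volume.restrict (Icc (0 : ℝ) 1)

namespace HasUniformMarginals

variable {ι : Type*} {ν ν' : Measure (ι → ℝ)}

theorem ae_eval (hν : HasUniformMarginals ν) (i : ι) {p : ℝ → Prop}
    (hp : ∀ᵐ t ∂volume.restrict (Icc (0 : ℝ) 1), p t) : ∀ᵐ x ∂ν, p (x i) :=
  ae_of_ae_map (measurable_pi_apply i).aemeasurable (hν i ▸ hp)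

theorem ae_eval_mem_Ioo (hν : HasUniformMarginals ν) (i : ι) : ∀ᵐ x ∂ν, x i ∈ Ioo 0 1 :=
  hν.ae_eval i <| by
    rw [Measure.restrict_congr_set Ioo_ae_eq_Icc.symm]
    exact ae_restrict_mem measurableSet_Ioo

theorem ae_eval_ne (hν : HasUniformMarginals ν) (i : ι) (a : ℝ) : ∀ᵐ x ∂ν, x i ≠ a :=
  hν.ae_eval i (Measure.ae_ne _ a)

theorem measure_pi_Iic_eq_zero (hν : HasUniformMarginals ν) {u : ι → ℝ} {i : ι} (hi : u i ≤ 0) :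
    ν (pi univ fun j => Iic (u j)) = 0 :=
  measure_eq_zero_iff_ae_notMem.2 <| (hν.ae_eval_mem_Ioo i).mono fun _ hx hxu =>
    (hx.1.trans_le ((hxu i (mem_univ i)).trans hi)).false

variable [Finite ι]

theorem pi_Icc_zero_ae_eq_pi_Iic (hν : HasUniformMarginals ν) (u : ι → ℝ) :
    (pi univ fun i => Icc 0 (u i)) =ᵐ[ν] pi univ fun i => Iic (u i) := by
  refine eventuallyEq_set.2 ((ae_all_iff.2 hν.ae_eval_mem_Ioo).mono fun x hx => ?_)
  simp only [mem_univ_pi, mem_Icc, mem_Iic]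
  exact forall_congr' fun i => and_iff_right (hx i).1.le

theorem pi_Iic_ae_eq_pi_Iio_min_one (hν : HasUniformMarginals ν) (u : ι → ℝ) :
    (pi univ fun i => Iic (u i)) =ᵐ[ν] pi univ fun i => Iio (min (u i) 1) := by
  refine eventuallyEq_set.2 <| (ae_all_iff.2 fun i =>
    (hν.ae_eval_mem_Ioo i).and (hν.ae_eval_ne i (u i))).mono fun x hx => ?_
  simp only [mem_univ_pi, mem_Iic, mem_Iio, lt_min_iff]
  exact forall_congr' fun i =>
    ⟨fun h => ⟨h.lt_of_ne (hx i).2, (hx i).1.2⟩, fun h => h.1.le⟩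

theorem measure_pi_Iic_eq (hν : HasUniformMarginals ν) (hν' : HasUniformMarginals ν')
    (h : ∀ u : ι → ℝ, (∀ i, u i ∈ Ioo 0 1) →
      ν (pi univ fun i => Iic (u i)) = ν' (pi univ fun i => Iic (u i)))
    (u : ι → ℝ) : ν (pi univ fun i => Iic (u i)) = ν' (pi univ fun i => Iic (u i)) := by
  by_cases hu : ∃ i, u i ≤ 0
  · obtain ⟨i, hi⟩ := hu
    rw [hν.measure_pi_Iic_eq_zero hi, hν'.measure_pi_Iic_eq_zero hi]
  push Not at hu
  obtain ⟨s, hs_mono, hs_mem, hs_iUnion⟩ :=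
    exists_monotone_iUnion_pi_Iic_eq_pi_Iio (a := 0) fun i => lt_min (hu i) one_pos
  have hboxes_mono : Monotone fun n => pi univ fun i => Iic (s n i) :=
    fun m n hmn => pi_mono fun i _ => Iic_subset_Iic.2 (hs_mono hmn i)
  rw [measure_congr (hν.pi_Iic_ae_eq_pi_Iio_min_one u),
    measure_congr (hν'.pi_Iic_ae_eq_pi_Iio_min_one u), ← hs_iUnion,
    hboxes_mono.measure_iUnion, hboxes_mono.measure_iUnion]
  exact iSup_congr fun n =>
    h (s n) fun i => ⟨(hs_mem n i).1, (hs_mem n i).2.trans_le (min_le_right _ _)⟩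

end HasUniformMarginals

theorem sklar_uniqueness_general (d : ℕ)
    (μ : Measure (Fin d → ℝ)) [IsProbabilityMeasure μ]
    (F : Fin d → ℝ → ℝ)
    (hF : ∀ i y, F i y = (μ {x | x i ≤ y}).toReal)
    (hFcont : ∀ i, Continuous (F i))
    (ν ν' : Measure (Fin d → ℝ))
    (hν : IsProbabilityMeasure ν) (hν' : IsProbabilityMeasure ν')
    (hνmarg : ∀ i, ν.map (fun x => x i) = volume.restrict (Set.Icc (0:ℝ) 1))
    (hν'marg : ∀ i, ν'.map (fun x => x i) = volume.restrict (Set.Icc (0:ℝ) 1))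
    (hνrep : ∀ y : Fin d → ℝ,
      μ (Set.univ.pi fun i => Set.Iic (y i)) =
        ν (Set.univ.pi fun i => Set.Icc 0 (F i (y i))))
    (hν'rep : ∀ y : Fin d → ℝ,
      μ (Set.univ.pi fun i => Set.Iic (y i)) =
        ν' (Set.univ.pi fun i => Set.Icc 0 (F i (y i)))) :
    ν = ν' := by
  have hF_range : ∀ i, Ioo 0 1 ⊆ range (F i) := fun i => by
    have := Measure.isProbabilityMeasure_map (μ := μ) (measurable_pi_apply i).aemeasurable
    have hF_cdf : F i = cdf (μ.map fun x => x i) := funext fun y => by rw [hF, cdf_map_eval]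
    exact hF_cdf ▸ Ioo_subset_range_cdf _ (hF_cdf ▸ hFcont i)
  refine Measure.ext_of_pi_Iic (by simp) <|
    HasUniformMarginals.measure_pi_Iic_eq hνmarg hν'marg fun u hu => ?_
  choose y hy using fun i => hF_range i (hu i)
  rw [← measure_congr (HasUniformMarginals.pi_Icc_zero_ae_eq_pi_Iic hνmarg u),
    ← measure_congr (HasUniformMarginals.pi_Icc_zero_ae_eq_pi_Iic hν'marg u)]
  simpa only [hy] using (hνrep y).symm.trans (hν'rep y)

/-- Uniqueness part of Sklar's theorem: if all marginal cdfs of `μ` are continuous,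
then any two copulas `ν`, `ν'` (probability measures supported on `[0,1]^d` with
uniform marginals) representing `μ` coincide. -/
theorem sklar_uniqueness (d : ℕ) (hd : 1 ≤ d)
    (μ : Measure (Fin d → ℝ)) [IsProbabilityMeasure μ]
    (F : Fin d → ℝ → ℝ)
    (hF : ∀ i y, F i y = (μ {x | x i ≤ y}).toReal)
    (hFcont : ∀ i, Continuous (F i))
    (ν ν' : Measure (Fin d → ℝ))
    (hν : IsProbabilityMeasure ν) (hν' : IsProbabilityMeasure ν')
    (hνsupp : ν (Set.univ.pi fun _ => Set.Icc (0:ℝ) 1) = 1)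
    (hν'supp : ν' (Set.univ.pi fun _ => Set.Icc (0:ℝ) 1) = 1)
    (hνmarg : ∀ i, ν.map (fun x => x i) = volume.restrict (Set.Icc (0:ℝ) 1))
    (hν'marg : ∀ i, ν'.map (fun x => x i) = volume.restrict (Set.Icc (0:ℝ) 1))
    (hνrep : ∀ y : Fin d → ℝ,
      μ (Set.univ.pi fun i => Set.Iic (y i)) =
        ν (Set.univ.pi fun i => Set.Icc 0 (F i (y i))))
    (hν'rep : ∀ y : Fin d → ℝ,
      μ (Set.univ.pi fun i => Set.Iic (y i)) =
        ν' (Set.univ.pi fun i => Set.Icc 0 (F i (y i)))) :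
    ν = ν' :=
  sklar_uniqueness_general d μ F hF hFcont ν ν' hν hν' hνmarg hν'marg hνrep hν'rep
end
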